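/- arXiv:2406.14699 — 3 statements merged into one kernel-verified Lean document; each statement's English description precedes it below -/
import Mathlib

section
/- Let m ≥ 1, let X be a nonempty finite set, and let f : X → ℝ^m with f_j(x) > 0 for all x ∈ X and j = 1,…,m. If x* ∈ X is weakly Pareto optimal, then there exists θ ∈ Θ (namely θ_j proportional to 1/f_j(x*)) such that x* maximizes x ↦ min_{j=1,…,m} θ_j f_j(x) over X, i.e., x* solves the Chebyshev scalarized problem with ρ = 0. -/
theorem weakly_pareto_optimal_solves_chebyshev_problem
    {X : Type*} [Fintype X] [Nonempty X] {m : ℕ} (hm : 1 ≤ m)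
    (f : X → Fin m → ℝ) (hf : ∀ x j, 0 < f x j) (xstar : X)
    (hweak : ¬ ∃ x' : X, ∀ j, f xstar j < f x' j) :
    ∃ θ : Fin m → ℝ, θ ∈ stdSimplex ℝ (Fin m) ∧
      (∃ c : ℝ, 0 < c ∧ ∀ j, θ j = c / f xstar j) ∧
      ∀ x : X, (⨅ j, θ j * f x j) ≤ ⨅ j, θ j * f xstar j := by
  haveI : Nonempty (Fin m) := ⟨⟨0, hm⟩⟩
  set S : ℝ := ∑ j, (f xstar j)⁻¹ with hS
  have hSpos : 0 < S := Finset.sum_pos (fun j _ => inv_pos.mpr (hf xstar j)) ⟨Classical.arbitrary _, Finset.mem_univ _⟩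
  set c : ℝ := S⁻¹ with hc
  have hcpos : 0 < c := inv_pos.mpr hSpos
  refine ⟨fun j => c / f xstar j, ⟨fun j => div_nonneg hcpos.le (hf xstar j).le, ?_⟩,
    ⟨c, hcpos, fun j => rfl⟩, ?_⟩
  · simp only [div_eq_mul_inv]
    rw [← Finset.mul_sum, ← hS, hc, inv_mul_cancel₀ hSpos.ne']
  · intro x
    have hconst : ∀ j, c / f xstar j * f xstar j = c := fun j =>
      div_mul_cancel₀ c (hf xstar j).ne'
    have hstar : (⨅ j, c / f xstar j * f xstar j) = c := by
      simp [hconst]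
    rw [hstar]
    by_contra h
    push_neg at h
    apply hweak
    refine ⟨x, fun j => ?_⟩
    have hle : (⨅ j, c / f xstar j * f x j) ≤ c / f xstar j * f x j :=
      ciInf_le (Finite.bddBelow_range _) j
    have : c < c / f xstar j * f x j := lt_of_lt_of_le h hle
    rw [div_mul_eq_mul_div, lt_div_iff₀ (hf xstar j)] at this
    have := (mul_lt_mul_iff_right₀ hcpos).mp this
    linarith
end

section
/- Let m ≥ 1, let X be a nonempty finite set, and let f : X → ℝ^m with f_j(x) > 0 for all x ∈ X and j = 1,…,m. If x* ∈ X lies in the Pareto-optimal set X_f^*, then there exist θ ∈ Θ and ρ₀ > 0 such that for every ρ ∈ [0, ρ₀], x* maximizes x ↦ s(f(x); θ) over X, where s is the augmented Chebyshev scalarization with parameter ρ. That is, for ρ small enough, every Pareto-optimal point is a solution of the augmented Chebyshev scalarized problem for some θ ∈ Θ. -/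
/-- Augmented Chebyshev scalarization: `s(y; θ) = min_j θ_j y_j + ρ * ∑_j θ_j y_j`. -/
noncomputable def chebScal {m : ℕ} (ρ : ℝ) (θ y : Fin m → ℝ) : ℝ :=
  (⨅ j, θ j * y j) + ρ * ∑ j, θ j * y j

theorem pareto_optimal_solves_augmented_chebyshev_problem
    {X : Type*} [Fintype X] [Nonempty X] {m : ℕ} (hm : 1 ≤ m)
    (f : X → Fin m → ℝ) (hf : ∀ x j, 0 < f x j) (xstar : X)
    (hpareto : ¬ ∃ x' : X, (∀ j, f xstar j ≤ f x' j) ∧ ∃ j, f xstar j < f x' j) :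
    ∃ θ : Fin m → ℝ, θ ∈ stdSimplex ℝ (Fin m) ∧
      ∃ ρ₀ : ℝ, 0 < ρ₀ ∧ ∀ ρ ∈ Set.Icc (0 : ℝ) ρ₀,
        ∀ x : X, chebScal ρ θ (f x) ≤ chebScal ρ θ (f xstar) := by
  have hmne : Nonempty (Fin m) := ⟨⟨0, hm⟩⟩
  set S : ℝ := ∑ j, (f xstar j)⁻¹ with hS
  have hSpos : 0 < S :=
    Finset.sum_pos (fun j _ => inv_pos.2 (hf xstar j)) Finset.univ_nonempty
  set θ : Fin m → ℝ := fun j => (f xstar j)⁻¹ * S⁻¹ with hθ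
  have hθpos : ∀ j, 0 < θ j :=
    fun j => mul_pos (inv_pos.2 (hf xstar j)) (inv_pos.2 hSpos)
  have hkey : ∀ j, θ j * f xstar j = S⁻¹ := by
    intro j
    simp only [hθ]
    rw [mul_right_comm, inv_mul_cancel₀ (hf xstar j).ne', one_mul]
  have hinfstar : (⨅ j, θ j * f xstar j) = S⁻¹ := by
    simp only [hkey]; exact ciInf_const
  -- dichotomy
  have hdich : ∀ x : X, (∀ j, f x j = f xstar j) ∨ (∃ j, θ j * f x j < S⁻¹) := by
    intro x
    by_cases h : ∃ j, θ j * f x j < S⁻¹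
    · exact Or.inr h
    · push_neg at h
      left
      have hle : ∀ j, f xstar j ≤ f x j := by
        intro j
        have := h j
        rw [← hkey j] at this
        exact le_of_mul_le_mul_left this (hθpos j)
      have : ¬ ∃ j, f xstar j < f x j := fun hj => hpareto ⟨x, hle, hj⟩
      push_neg at this
      exact fun j => le_antisymm (this j) (hle j)
  -- per-point bound
  have hper : ∀ x : X, ∃ r : ℝ, 0 < r ∧ ∀ ρ ∈ Set.Icc (0 : ℝ) r,
      chebScal ρ θ (f x) ≤ chebScal ρ θ (f xstar) := by
    intro x
    rcases hdich x with heq | ⟨j₀, hj₀⟩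
    · refine ⟨1, one_pos, fun ρ _ => ?_⟩
      have : f x = f xstar := funext heq
      rw [this]
    · set Ix : ℝ := ⨅ j, θ j * f x j with hIx
      have hIle : Ix ≤ θ j₀ * f x j₀ :=
        ciInf_le (Finite.bddBelow_range _) j₀
      have hIlt : Ix < S⁻¹ := lt_of_le_of_lt hIle hj₀
      set ε : ℝ := S⁻¹ - Ix with hε
      have hεpos : 0 < ε := by simp [hε]; linarith
      set D : ℝ := (∑ j, θ j * f x j) - (∑ j, θ j * f xstar j) with hD
      set r : ℝ := ε / (2 * max D 1) with hr
      clear_value Ix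
      have hmaxpos : 0 < max D 1 := lt_max_of_lt_right one_pos
      have hrpos : 0 < r := div_pos hεpos (by linarith)
      have hεD : ε = S⁻¹ - Ix := hε
      have hDD : D = (∑ j, θ j * f x j) - (∑ j, θ j * f xstar j) := hD
      have hrr : r = ε / (2 * max D 1) := hr
      clear_value ε D r
      refine ⟨r, hrpos, fun ρ hρ => ?_⟩
      obtain ⟨hρ0, hρr⟩ := hρ
      have hρD : ρ * D ≤ ε / 2 := by
        rcases le_or_gt D 0 with hD0 | hD0
        · have : ρ * D ≤ 0 := mul_nonpos_of_nonneg_of_nonpos hρ0 hD0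
          linarith
        · have h1 : ρ * D ≤ r * max D 1 := by
            apply mul_le_mul hρr (le_max_left D 1) (le_of_lt hD0)
            exact le_of_lt hrpos
          have h2 : r * max D 1 = ε / 2 := by
            rw [hrr]
            field_simp
          linarith
      show (⨅ j, θ j * f x j) + ρ * ∑ j, θ j * f x j ≤ (⨅ j, θ j * f xstar j) + ρ * ∑ j, θ j * f xstar j
      rw [hinfstar, ← hIx]
      have : ρ * ∑ j, θ j * f x j = ρ * ∑ j, θ j * f xstar j + ρ * D := by
        rw [hDD]; ring
      linarith
  choose r hrpos hrineq using hper
  refine ⟨θ, ⟨fun j => (hθpos j).le, ?_⟩, Finset.univ.inf' Finset.univ_nonempty r,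
    ?_, fun ρ hρ x => ?_⟩
  · show (∑ j, (f xstar j)⁻¹ * S⁻¹) = 1
    rw [← Finset.sum_mul, ← hS, mul_inv_cancel₀ hSpos.ne']
  · rw [Finset.lt_inf'_iff]
    exact fun x _ => hrpos x
  · refine hrineq x ρ ⟨hρ.1, le_trans hρ.2 ?_⟩
    exact Finset.inf'_le r (Finset.mem_univ x)
end

section
/- Let λ > 0, let q ≥ 1, let a_1, …, a_q ∈ ℝ, and let ε_1, …, ε_q be independent real random variables each with the Gumbel(0, λ) distribution. Then for each i ∈ {1, …, q}, the probability that a_i + ε_i > a_{i'} + ε_{i'} for all i' ≠ i equals exp(a_i/λ) / Σ_{i'=1}^q exp(a_{i'}/λ). In particular, the argmax of the Gumbel-perturbed utilities follows the softmax (Logistic/multinomial logit) distribution over {1, …, q}. -/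
open MeasureTheory ProbabilityTheory

/-- The Gumbel(0, λ) distribution on ℝ, given by its density with respect to Lebesgue measure. -/
noncomputable def gumbel (l : ℝ) : Measure ℝ :=
  volume.withDensity fun x => ENNReal.ofReal ((1 / l) * Real.exp (-x / l - Real.exp (-x / l)))

/-!
Condition on `ε i = t`: the other utilities fall below `a i + t` independently, with
probabilities `F (t + a i - a j)`, where `F x = exp (-exp (-x / l))` is the Gumbel CDF. A shift
of the argument only rescales the coefficient of `exp (-x / l)` in `-log F`, so these factors
multiply to `exp (-c * exp (-t / l))` with `c = ∑ j ≠ i, exp ((a j - a i) / l)`. Against the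
Gumbel density this integrand is `1 / (1 + c)` times the derivative of
`exp (-(1 + c) * exp (-t / l))`, which integrates to
`1 / (1 + c) = exp (a i / l) / ∑ j, exp (a j / l)`.
-/

open Real Filter Set Topology

theorem MeasureTheory.integrableOn_Iic_deriv_of_nonneg' {g g' : ℝ → ℝ} {a m : ℝ}
    (hderiv : ∀ x ∈ Iic a, HasDerivAt g (g' x) x) (g'pos : ∀ x ∈ Iio a, 0 ≤ g' x)
    (hg : Tendsto g atBot (𝓝 m)) : IntegrableOn g' (Iic a) := by
  have hreflected : IntegrableOn (fun x => -g' (-x)) (Ioi (-a)) := by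
    refine integrableOn_Ioi_deriv_of_nonpos' (g := fun x => g (-x)) (fun x hx => ?_)
      (fun x hx => ?_) (hg.comp tendsto_neg_atTop_atBot)
    · simpa [Function.comp_def] using
        (hderiv (-x) (mem_Iic.mpr (neg_le.mp hx))).comp x (hasDerivAt_neg x)
    · simpa using g'pos (-x) (mem_Iio.mpr (neg_lt.mp hx))
  have := ((integrableOn_Ici_iff_integrableOn_Ioi).mpr hreflected.neg).comp_neg_Iic
  simpa using this

-- The CDF of the Gumbel law with scale `l` and location `l * log c`; `gumbel l` has `c = 1`.
noncomputable def gumbelCDF (l c x : ℝ) : ℝ := exp (-(c * exp (-x / l)))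

noncomputable def gumbelPDF (l c x : ℝ) : ℝ := c / l * exp (-x / l) * gumbelCDF l c x

theorem hasDerivAt_gumbelCDF (l c x : ℝ) : HasDerivAt (gumbelCDF l c) (gumbelPDF l c x) x := by
  refine ((((hasDerivAt_neg x).div_const l).exp.const_mul c).neg).exp.congr_deriv ?_
  simp only [gumbelPDF, gumbelCDF, Pi.neg_apply]
  ring

theorem gumbelPDF_nonneg {l c : ℝ} (hl : 0 ≤ l) (hc : 0 ≤ c) (x : ℝ) :
    0 ≤ gumbelPDF l c x := by
  unfold gumbelPDF gumbelCDF; positivity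

theorem tendsto_gumbelCDF_atBot {l c : ℝ} (hl : 0 < l) (hc : 0 < c) :
    Tendsto (gumbelCDF l c) atBot (𝓝 0) := by
  have : Tendsto (fun x : ℝ => -x / l) atBot atTop :=
    tendsto_neg_atBot_atTop.atTop_div_const hl
  exact tendsto_exp_atBot.comp <| tendsto_neg_atTop_atBot.comp <|
    (tendsto_exp_atTop.comp this).const_mul_atTop hc

theorem tendsto_gumbelCDF_atTop {l : ℝ} (hl : 0 < l) (c : ℝ) :
    Tendsto (gumbelCDF l c) atTop (𝓝 1) := by
  have : Tendsto (fun x : ℝ => -x / l) atTop atBot :=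
    tendsto_neg_atTop_atBot.atBot_div_const hl
  have hexponent : Tendsto (fun x => -(c * exp (-x / l))) atTop (𝓝 0) := by
    simpa using ((tendsto_exp_atBot.comp this).const_mul c).neg
  exact tendsto_exp_nhds_zero_nhds_one.comp hexponent

theorem integrable_gumbelPDF {l c : ℝ} (hl : 0 < l) (hc : 0 < c) :
    Integrable (gumbelPDF l c) := by
  rw [← integrableOn_univ, ← Iic_union_Ioi (a := 0)]
  exact (integrableOn_Iic_deriv_of_nonneg' (fun x _ => hasDerivAt_gumbelCDF l c x)
      (fun x _ => gumbelPDF_nonneg hl.le hc.le x) (tendsto_gumbelCDF_atBot hl hc)).union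
    (integrableOn_Ioi_deriv_of_nonneg' (fun x _ => hasDerivAt_gumbelCDF l c x)
      (fun x _ => gumbelPDF_nonneg hl.le hc.le x) (tendsto_gumbelCDF_atTop hl c))

theorem integral_gumbelPDF {l c : ℝ} (hl : 0 < l) (hc : 0 < c) : ∫ x, gumbelPDF l c x = 1 := by
  simpa using integral_of_hasDerivAt_of_tendsto (hasDerivAt_gumbelCDF l c)
    (integrable_gumbelPDF hl hc) (tendsto_gumbelCDF_atBot hl hc) (tendsto_gumbelCDF_atTop hl c)

theorem setIntegral_Iic_gumbelPDF {l c : ℝ} (hl : 0 < l) (hc : 0 < c) (t : ℝ) :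
    ∫ x in Iic t, gumbelPDF l c x = gumbelCDF l c t := by
  simpa using integral_Iic_of_hasDerivAt_of_tendsto' (fun x _ => hasDerivAt_gumbelCDF l c x)
    (integrable_gumbelPDF hl hc).integrableOn (tendsto_gumbelCDF_atBot hl hc)

theorem gumbel_eq_withDensity (l : ℝ) :
    gumbel l = volume.withDensity fun x => ENNReal.ofReal (gumbelPDF l 1 x) := by
  simp only [gumbel, gumbelPDF]
  congr! 3 with x
  rw [gumbelCDF, sub_eq_add_neg, exp_add]
  ring_nf

theorem gumbel_Iio {l : ℝ} (hl : 0 < l) (t : ℝ) :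
    gumbel l (Iio t) = ENNReal.ofReal (gumbelCDF l 1 t) := by
  rw [gumbel_eq_withDensity, withDensity_apply _ measurableSet_Iio,
    setLIntegral_congr Iio_ae_eq_Iic,
    ← ofReal_integral_eq_lintegral_ofReal (integrable_gumbelPDF hl one_pos).integrableOn
      (ae_of_all _ (gumbelPDF_nonneg hl.le zero_le_one)), setIntegral_Iic_gumbelPDF hl one_pos]

theorem isProbabilityMeasure_gumbel {l : ℝ} (hl : 0 < l) : IsProbabilityMeasure (gumbel l) := by
  rw [isProbabilityMeasure_iff, gumbel_eq_withDensity, withDensity_apply _ MeasurableSet.univ,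
    setLIntegral_univ, ← ofReal_integral_eq_lintegral_ofReal (integrable_gumbelPDF hl one_pos)
      (ae_of_all _ (gumbelPDF_nonneg hl.le zero_le_one)), integral_gumbelPDF hl one_pos,
    ENNReal.ofReal_one]

theorem gumbelCDF_add_right (l c x b : ℝ) :
    gumbelCDF l c (x + b) = gumbelCDF l (c * exp (-b / l)) x := by
  rw [gumbelCDF, gumbelCDF, neg_add, add_div, exp_add]
  ring_nf

theorem prod_gumbelCDF {ι : Type*} (s : Finset ι) (l : ℝ) (c : ι → ℝ) (x : ℝ) :
    ∏ j ∈ s, gumbelCDF l (c j) x = gumbelCDF l (∑ j ∈ s, c j) x := by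
  simp only [gumbelCDF, ← exp_sum, Finset.sum_mul, Finset.sum_neg_distrib]

theorem gumbelPDF_mul_gumbelCDF {c d : ℝ} (hcd : c + d ≠ 0) (l x : ℝ) :
    gumbelPDF l c x * gumbelCDF l d x = c / (c + d) * gumbelPDF l (c + d) x := by
  simp only [gumbelPDF, gumbelCDF]
  field_simp
  rw [mul_assoc, ← exp_add]
  ring_nf

theorem lintegral_gumbelCDF_gumbel {l c : ℝ} (hl : 0 < l) (hc : 0 ≤ c) :
    ∫⁻ t, ENNReal.ofReal (gumbelCDF l c t) ∂gumbel l = ENNReal.ofReal (1 / (1 + c)) := by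
  have hc1 : 0 < 1 + c := by linarith
  have hdensity (t : ℝ) : ENNReal.ofReal (gumbelPDF l 1 t) * ENNReal.ofReal (gumbelCDF l c t)
      = ENNReal.ofReal (1 / (1 + c) * gumbelPDF l (1 + c) t) := by
    rw [← ENNReal.ofReal_mul (gumbelPDF_nonneg hl.le zero_le_one t),
      gumbelPDF_mul_gumbelCDF hc1.ne']
  rw [gumbel_eq_withDensity, lintegral_withDensity_eq_lintegral_mul _
    (by unfold gumbelPDF gumbelCDF; fun_prop) (by unfold gumbelCDF; fun_prop)]
  simp only [Pi.mul_apply, hdensity]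
  rw [← ofReal_integral_eq_lintegral_ofReal ((integrable_gumbelPDF hl hc1).const_mul _)
    (ae_of_all _ fun t => mul_nonneg (by positivity) (gumbelPDF_nonneg hl.le hc1.le t)),
    integral_const_mul, integral_gumbelPDF hl hc1, mul_one]

theorem measure_pi_setOf_forall_ne_lt_add {n : ℕ} (μ : Fin (n + 1) → Measure ℝ)
    [∀ i, SigmaFinite (μ i)] (i : Fin (n + 1)) (b : Fin (n + 1) → ℝ) :
    Measure.pi μ {x | ∀ j ≠ i, x j < x i + b j}
      = ∫⁻ t, ∏ j, μ (i.succAbove j) (Iio (t + b (i.succAbove j))) ∂μ i := by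
  set T : Set (ℝ × (Fin n → ℝ)) := {p | ∀ j, p.2 j < p.1 + b (i.succAbove j)}
  have hT : MeasurableSet T := by
    simp only [T, ofPred_forall]
    exact MeasurableSet.iInter fun j => measurableSet_lt (by fun_prop) (by fun_prop)
  have hpreimage : MeasurableEquiv.piFinSuccAbove (fun _ => ℝ) i ⁻¹' T
      = {x | ∀ j ≠ i, x j < x i + b j} := by
    ext x
    simp [T, Fin.forall_iff_succAbove i, Fin.removeNth]
  rw [← hpreimage, (measurePreserving_piFinSuccAbove μ i).measure_preimage_equiv,
    Measure.prod_apply hT]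
  congr! with t
  have hslice : Prod.mk t ⁻¹' T = univ.pi fun j => Iio (t + b (i.succAbove j)) := by
    ext y; simp [T]
  rw [hslice, Measure.pi_pi]

theorem exp_div_sum_exp_eq_one_div_one_add {n : ℕ} (a : Fin (n + 1) → ℝ) (l : ℝ)
    (i : Fin (n + 1)) :
    exp (a i / l) / ∑ i', exp (a i' / l)
      = 1 / (1 + ∑ j, exp (-(a i - a (i.succAbove j)) / l)) := by
  have hsum : ∑ i', exp (a i' / l)
      = exp (a i / l) * (1 + ∑ j, exp (-(a i - a (i.succAbove j)) / l)) := by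
    rw [Fin.sum_univ_succAbove _ i, mul_add, mul_one, Finset.mul_sum]
    congr 1
    refine Finset.sum_congr rfl fun j _ => ?_
    rw [← exp_add]
    ring_nf
  rw [hsum, div_mul_eq_div_div, div_self (exp_pos _).ne']

theorem gumbel_argmax_softmax_general
    {Ω : Type*} [MeasurableSpace Ω] (P : Measure Ω) [IsProbabilityMeasure P]
    (l : ℝ) (hl : 0 < l) (q : ℕ) (a : Fin q → ℝ)
    (ε : Fin q → Ω → ℝ) (hmeas : ∀ i, Measurable (ε i))
    (hindep : iIndepFun ε P)
    (hdist : ∀ i, Measure.map (ε i) P = gumbel l) (i : Fin q) :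
    P {ω | ∀ i', i' ≠ i → a i' + ε i' ω < a i + ε i ω}
      = ENNReal.ofReal (Real.exp (a i / l) / ∑ i', Real.exp (a i' / l)) := by
  obtain ⟨n, rfl⟩ : ∃ n, q = n + 1 := Nat.exists_eq_succ_of_ne_zero i.pos.ne'
  have := isProbabilityMeasure_gumbel hl
  have hlaw : P.map (fun ω j => ε j ω) = Measure.pi fun _ => gumbel l := by
    simpa only [hdist] using hindep.map_fun_eq_pi_map fun j => (hmeas j).aemeasurable
  set c := ∑ j, exp (-(a i - a (i.succAbove j)) / l)
  have hevent : {ω | ∀ i', i' ≠ i → a i' + ε i' ω < a i + ε i ω}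
      = (fun ω j => ε j ω) ⁻¹' {x | ∀ j ≠ i, x j < x i + (a i - a j)} := by
    ext ω
    simp only [mem_preimage, mem_ofPred_eq]
    exact forall₂_congr fun j _ => by constructor <;> intro h <;> linarith
  calc P {ω | ∀ i', i' ≠ i → a i' + ε i' ω < a i + ε i ω}
      = Measure.pi (fun _ => gumbel l) {x | ∀ j ≠ i, x j < x i + (a i - a j)} := by
        rw [hevent, ← Measure.map_apply (measurable_pi_lambda _ hmeas) (by measurability), hlaw]
    _ = ∫⁻ t, ENNReal.ofReal (gumbelCDF l c t) ∂gumbel l := by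
        rw [measure_pi_setOf_forall_ne_lt_add]
        refine lintegral_congr fun t => ?_
        simp only [gumbel_Iio hl, gumbelCDF_add_right, one_mul]
        rw [← ENNReal.ofReal_prod_of_nonneg (f := fun j => gumbelCDF l _ t)
          fun j _ => (exp_pos _).le, prod_gumbelCDF]
    _ = ENNReal.ofReal (1 / (1 + c)) := lintegral_gumbelCDF_gumbel hl (by positivity)
    _ = ENNReal.ofReal (exp (a i / l) / ∑ i', exp (a i' / l)) := by
        rw [exp_div_sum_exp_eq_one_div_one_add]

theorem gumbel_argmax_softmax
    {Ω : Type*} [MeasurableSpace Ω] (P : Measure Ω) [IsProbabilityMeasure P]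
    (l : ℝ) (hl : 0 < l) (q : ℕ) (hq : 1 ≤ q) (a : Fin q → ℝ)
    (ε : Fin q → Ω → ℝ) (hmeas : ∀ i, Measurable (ε i))
    (hindep : iIndepFun ε P)
    (hdist : ∀ i, Measure.map (ε i) P = gumbel l) (i : Fin q) :
    P {ω | ∀ i', i' ≠ i → a i' + ε i' ω < a i + ε i ω}
      = ENNReal.ofReal (Real.exp (a i / l) / ∑ i', Real.exp (a i' / l)) :=
  gumbel_argmax_softmax_general P l hl q a ε hmeas hindep hdist i
end
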